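/- Let ω ∈ C¹([0,∞)) be positive and nondecreasing, with r ω'(r) ≤ C ω(r) for all r ≥ 0, and suppose additionally ω(r₁ r₂) ≤ C(ω(r₁) + ω(r₂)) for all r₁, r₂ ≥ 0. Then for every ε > 0 there exists C_ε > 0 such that ω(r) ≤ C_ε (1 + r)^ε for all r ≥ 0. -/

import Mathlib

open Set

/-- Let `ω ∈ C¹([0,∞))` be positive and nondecreasing, with `r ω'(r) ≤ C ω(r)` for all `r ≥ 0`,
and suppose additionally `ω(r₁ r₂) ≤ C(ω(r₁) + ω(r₂))` for all `r₁, r₂ ≥ 0`. Then for every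
`ε > 0` there exists `C_ε > 0` such that `ω(r) ≤ C_ε (1 + r)^ε` for all `r ≥ 0`. -/
theorem stmt_3 (ω ω' : ℝ → ℝ) (C : ℝ) (hC : 0 < C)
    (hpos : ∀ r ≥ (0:ℝ), 0 < ω r)
    (hderiv : ∀ r ≥ (0:ℝ), HasDerivAt ω (ω' r) r)
    (hcont : ContinuousOn ω' (Set.Ici 0))
    (hmono : ∀ r ≥ (0:ℝ), 0 ≤ ω' r)
    (hlog : ∀ r ≥ (0:ℝ), r * ω' r ≤ C * ω r)
    (hsub : ∀ r₁ ≥ (0:ℝ), ∀ r₂ ≥ (0:ℝ), ω (r₁ * r₂) ≤ C * (ω r₁ + ω r₂)) :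
    ∀ ε > (0:ℝ), ∃ Cε > (0:ℝ), ∀ r ≥ (0:ℝ), ω r ≤ Cε * (1 + r) ^ ε := by
  -- 2C ≥ 1
  have h2C : (1:ℝ) ≤ 2 * C := by
    have h := hsub 1 zero_le_one 1 zero_le_one
    rw [one_mul] at h
    have h1 := hpos 1 zero_le_one
    nlinarith [h, h1]
  -- ω is continuous and monotone on [0,∞)
  have hωcont : ContinuousOn ω (Set.Ici 0) := fun x hx =>
    ((hderiv x hx).continuousAt).continuousWithinAt
  have hmonoOn : MonotoneOn ω (Set.Ici 0) := by
    apply monotoneOn_of_deriv_nonneg (convex_Ici 0) hωcont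
    · intro x hx
      rw [interior_Ici] at hx
      exact ((hderiv x (le_of_lt hx)).differentiableAt).differentiableWithinAt
    · intro x hx
      rw [interior_Ici] at hx
      rw [(hderiv x (le_of_lt hx)).deriv]
      exact hmono x (le_of_lt hx)
  -- Lemma A: ω r ≤ ω 1 * r ^ C for r ≥ 1
  have lemA : ∀ r ≥ (1:ℝ), ω r ≤ ω 1 * r ^ C := by
    have hF : AntitoneOn (fun r => ω r * r ^ (-C)) (Set.Ici 1) := by
      apply antitoneOn_of_deriv_nonpos (convex_Ici 1)
      · apply ContinuousOn.mul (hωcont.mono (Set.Ici_subset_Ici.mpr zero_le_one))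
        intro x hx
        have hx0 : x ≠ 0 := ne_of_gt (lt_of_lt_of_le zero_lt_one hx)
        exact (Real.continuousAt_rpow_const x (-C) (Or.inl hx0)).continuousWithinAt
      · intro x hx
        rw [interior_Ici] at hx
        have hx0 : (0:ℝ) < x := lt_trans zero_lt_one hx
        exact (((hderiv x hx0.le).mul
          (Real.hasDerivAt_rpow_const (Or.inl hx0.ne'))).differentiableAt).differentiableWithinAt
      · intro x hx
        rw [interior_Ici] at hx
        have hx0 : (0:ℝ) < x := lt_trans zero_lt_one hx
        have hD := (hderiv x hx0.le).mul (Real.hasDerivAt_rpow_const (x := x) (p := -C)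
          (Or.inl hx0.ne'))
        rw [show deriv (fun r => ω r * r ^ (-C)) x = _ from hD.deriv]
        have key : x * ω' x ≤ C * ω x := hlog x hx0.le
        have hxp : (0:ℝ) < x ^ (-C - 1) := Real.rpow_pos_of_pos hx0 _
        have e1 : x * x ^ (-C - 1) = x ^ (-C) := by
          nth_rewrite 1 [← Real.rpow_one x]
          rw [← Real.rpow_add hx0]
          norm_num
        have hω'x : 0 ≤ ω' x := hmono x hx0.le
        have hωx : 0 < ω x := hpos x hx0.le
        have e2 : ω' x * x ^ (-C) = (x * ω' x) * x ^ (-C - 1) := by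
          rw [← e1]; ring
        have : ω' x * x ^ (-C) ≤ C * ω x * x ^ (-C - 1) := by
          rw [e2]
          exact mul_le_mul_of_nonneg_right key hxp.le
        nlinarith [this]
    intro r hr
    have h := hF self_mem_Ici hr hr
    simp only [Real.one_rpow, mul_one] at h
    have hr0 : (0:ℝ) < r := lt_of_lt_of_le zero_lt_one hr
    have hpow : (0:ℝ) < r ^ C := Real.rpow_pos_of_pos hr0 C
    calc ω r = ω r * r ^ (-C) * r ^ C := by
          rw [mul_assoc, ← Real.rpow_add hr0]; simp
      _ ≤ ω 1 * r ^ C := mul_le_mul_of_nonneg_right h hpow.le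
  -- Lemma B: iterated square roots
  have lemB : ∀ n : ℕ, ∀ r ≥ (1:ℝ), ω r ≤ (2*C)^n * ω (r ^ ((1/2:ℝ)^n)) := by
    intro n
    induction n with
    | zero => intro r hr; simp
    | succ n ih =>
      intro r hr
      have hr0 : (0:ℝ) ≤ r := le_trans zero_le_one hr
      set s := r ^ ((1/2:ℝ)^n) with hs
      have hs1 : (1:ℝ) ≤ s := Real.one_le_rpow hr (by positivity)
      have hs0 : (0:ℝ) < s := lt_of_lt_of_le zero_lt_one hs1
      set t := s ^ ((1/2:ℝ)) with ht
      have ht0 : (0:ℝ) ≤ t := Real.rpow_nonneg hs0.le _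
      have hsq : s = t * t := by
        rw [ht, ← Real.rpow_add hs0]
        norm_num
      have h1 : ω s ≤ 2 * C * ω t := by
        have := hsub t ht0 t ht0
        rw [← hsq] at this
        linarith
      have h2 : t = r ^ ((1/2:ℝ)^(n+1)) := by
        rw [ht, hs, pow_succ, Real.rpow_mul hr0]
      calc ω r ≤ (2*C)^n * ω s := ih r hr
        _ ≤ (2*C)^n * (2 * C * ω t) := by
            apply mul_le_mul_of_nonneg_left h1 (by positivity)
        _ = (2*C)^(n+1) * ω t := by ring
        _ = (2*C)^(n+1) * ω (r ^ ((1/2:ℝ)^(n+1))) := by rw [← h2]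
  -- Final assembly
  intro ε hε
  obtain ⟨n, hn⟩ : ∃ n : ℕ, ((1:ℝ)/2)^n < ε / C := by
    exact exists_pow_lt_of_lt_one (div_pos hε hC) (by norm_num)
  have hω1 : 0 < ω 1 := hpos 1 zero_le_one
  have h2Cn : (1:ℝ) ≤ (2*C)^n := one_le_pow₀ h2C
  refine ⟨(2*C)^n * ω 1, by positivity, ?_⟩
  intro r hr
  have h1r : (0:ℝ) < 1 + r := by linarith
  have hpow1 : (1:ℝ) ≤ (1 + r) ^ ε := Real.one_le_rpow (by linarith) hε.le
  rcases le_or_gt r 1 with hle | hlt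
  · -- r ∈ [0,1]
    have hωr : ω r ≤ ω 1 := hmonoOn hr (by norm_num) hle
    calc ω r ≤ ω 1 := hωr
      _ = ω 1 * 1 := by ring
      _ ≤ (2*C)^n * ω 1 * ((1 + r) ^ ε) := by
          apply mul_le_mul (by nlinarith) hpow1 zero_le_one (by positivity)
  · -- r > 1
    have hr1 : (1:ℝ) ≤ r := hlt.le
    have hrp : (1:ℝ) ≤ r ^ ((1/2:ℝ)^n) := Real.one_le_rpow hr1 (by positivity)
    have step1 : ω r ≤ (2*C)^n * ω (r ^ ((1/2:ℝ)^n)) := lemB n r hr1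
    have step2 : ω (r ^ ((1/2:ℝ)^n)) ≤ ω 1 * (r ^ ((1/2:ℝ)^n)) ^ C :=
      lemA _ hrp
    have e3 : (r ^ ((1/2:ℝ)^n)) ^ C = r ^ ((1/2:ℝ)^n * C) := by
      rw [← Real.rpow_mul (by linarith)]
    have step3 : r ^ ((1/2:ℝ)^n * C) ≤ r ^ ε := by
      apply Real.rpow_le_rpow_of_exponent_le hr1
      exact le_of_lt ((lt_div_iff₀ hC).mp hn)
    have step4 : r ^ ε ≤ (1 + r) ^ ε := by
      apply Real.rpow_le_rpow (by linarith) (by linarith) hε.le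
    calc ω r ≤ (2*C)^n * ω (r ^ ((1/2:ℝ)^n)) := step1
      _ ≤ (2*C)^n * (ω 1 * (r ^ ((1/2:ℝ)^n)) ^ C) := by
          apply mul_le_mul_of_nonneg_left step2 (by positivity)
      _ = (2*C)^n * ω 1 * r ^ ((1/2:ℝ)^n * C) := by rw [e3]; ring
      _ ≤ (2*C)^n * ω 1 * r ^ ε := by
          apply mul_le_mul_of_nonneg_left step3 (by positivity)
      _ ≤ (2*C)^n * ω 1 * (1 + r) ^ ε := by
          apply mul_le_mul_of_nonneg_left step4 (by positivity)
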